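/- (Lemma 4) Let each f_{n,i} be differentiable and convex, let q_min = min_n q_n and q_max = max_n q_n, fix x = (x_1,…,x_N) ∈ ℝ^{Np} and a gradient table y = (y_{n,i}). For a joint index i = (i_1,…,i_N) ∈ ∏_n {1,…,q_n}, let y⁺(i) denote the table with y⁺(i)_{n,j} = x_n if j = i_n and y⁺(i)_{n,j} = y_{n,j} otherwise. Then the uniform average over joint indices satisfies (1/∏_n q_n) Σ_i p(y⁺(i)) ≤ (1 − 1/q_max) p(y) + (1/q_min) [f(x) − f(x*) − ⟨∇f(x*), x − x*⟩]. -/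

import Mathlib

open Finset
open scoped RealInnerProductSpace

noncomputable section

/-- Block vectors of `ℝ^{Np}`: one vector of `ℝᵖ` per node. -/
abbrev Evec (p : ℕ) := EuclideanSpace ℝ (Fin p)

/-- The local objective of node `n`: `f_n(w) = (1/q_n) ∑_i f_{n,i}(w)`. -/
def locf {N p : ℕ} {q : Fin N → ℕ}
    (f : (n : Fin N) → Fin (q n) → Evec p → ℝ) (n : Fin N) (w : Evec p) : ℝ :=
  (q n : ℝ)⁻¹ * ∑ i, f n i w

/-- The local stochastic averaging gradient of node `n` for index choice `j`:
`ĝ_n(j) = ∇f_{n,j}(x_n) − ∇f_{n,j}(y_{n,j}) + (1/q_n) ∑_i ∇f_{n,i}(y_{n,i})`. -/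
def hatg {N p : ℕ} {q : Fin N → ℕ}
    (f : (n : Fin N) → Fin (q n) → Evec p → ℝ)
    (x : Fin N → Evec p)
    (y : (n : Fin N) → Fin (q n) → Evec p)
    (n : Fin N) (j : Fin (q n)) : Evec p :=
  gradient (f n j) (x n) - gradient (f n j) (y n j)
    + (q n : ℝ)⁻¹ • ∑ i, gradient (f n i) (y n i)

/-- `p(y) = ∑_n (1/q_n) ∑_i [f_{n,i}(y_{n,i}) − f_{n,i}(x̃*) − ⟨∇f_{n,i}(x̃*), y_{n,i} − x̃*⟩]`. -/
def ptbl {N p : ℕ} {q : Fin N → ℕ}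
    (f : (n : Fin N) → Fin (q n) → Evec p → ℝ)
    (xstar : Evec p)
    (y : (n : Fin N) → Fin (q n) → Evec p) : ℝ :=
  ∑ n, (q n : ℝ)⁻¹ * ∑ i,
    (f n i (y n i) - f n i xstar - ⟪gradient (f n i) xstar, y n i - xstar⟫)

/-- The aggregate optimality gap `f(x) − f(x*) − ⟨∇f(x*), x − x*⟩`, written blockwise. -/
def optgap {N p : ℕ} {q : Fin N → ℕ}
    (f : (n : Fin N) → Fin (q n) → Evec p → ℝ)
    (xstar : Evec p) (x : Fin N → Evec p) : ℝ :=
  ∑ n, (locf f n (x n) - locf f n xstar - ⟪gradient (locf f n) xstar, x n - xstar⟫)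

/-- The quadratic form `aᵀ (M ⊗ I_p) a` of an extended weight matrix, written blockwise. -/
def quadForm {N p : ℕ} (M : Matrix (Fin N) (Fin N) ℝ) (a : Fin N → Evec p) : ℝ :=
  ∑ n, ⟪a n, ∑ m, M n m • a m⟫

/-- The squared Euclidean norm of a block vector of `ℝ^{Np}`. -/
def sqnormB {N p : ℕ} (a : Fin N → Evec p) : ℝ := ∑ n, ‖a n‖^2

/-- The gradient table obtained from `y` by replacing, at each node `n`, the entry
`i n` by the current iterate `x n`. -/
def tblUpd {N p : ℕ} {q : Fin N → ℕ}
    (x : Fin N → Evec p)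
    (y : (n : Fin N) → Fin (q n) → Evec p)
    (i : (n : Fin N) → Fin (q n)) : (n : Fin N) → Fin (q n) → Evec p :=
  fun n => Function.update (y n) (i n) (x n)

end

/-!
Each summand of `p` is a Bregman divergence `D_{f_{n,j}}(y_{n,j}, x̃*)`, nonnegative by first-order
convexity, and the optimality gap is `∑_n 𝔼_j D_{f_{n,j}}(x_n, x̃*)`. Under a uniformly random
joint index, node `n` overwrites a uniformly random entry of its row with `x_n`, so its
contribution to `p` becomes exactly `(1 − 1/q_n)` times the old one plus `1/q_n` times its share
of the optimality gap. Both being nonnegative, `1/q_n` may be replaced by `1/q_max` in the first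
term and by `1/q_min` in the second.
-/

open Function
open scoped BigOperators

section FirstOrder
variable {E : Type*} [NormedAddCommGroup E] [NormedSpace ℝ E]

theorem ConvexOn.apply_sub_le_of_hasFDerivAt {s : Set E} {f : E → ℝ} {f' : E →L[ℝ] ℝ}
    {a v : E} (hf : ConvexOn ℝ s f) (ha : a ∈ s) (hv : v ∈ s) (hf' : HasFDerivAt f f' a) :
    f' (v - a) ≤ f v - f a := by
  let ℓ : ℝ →ᵃ[ℝ] E := AffineMap.lineMap a v
  have hderiv : HasDerivAt (f ∘ ℓ) (f' (v - a)) 0 := by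
    rw [← AffineMap.lineMap_apply_zero a v (k := ℝ)] at hf'
    exact hf'.comp_hasDerivAt 0 AffineMap.hasDerivAt_lineMap
  simpa [ℓ, slope_def_field] using
    (hf.comp_affineMap ℓ).le_slope_of_hasDerivAt (by simpa [ℓ] using ha)
      (by simpa [ℓ] using hv) zero_lt_one hderiv

end FirstOrder

section Bregman
variable {E : Type*} [NormedAddCommGroup E] [InnerProductSpace ℝ E] [CompleteSpace E]

noncomputable def bregmanDiv (f : E → ℝ) (a v : E) : ℝ :=
  f v - f a - ⟪gradient f a, v - a⟫

theorem bregmanDiv_nonneg {f : E → ℝ} {a : E} (hf : ConvexOn ℝ Set.univ f)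
    (hd : DifferentiableAt ℝ f a) (v : E) : 0 ≤ bregmanDiv f a v := by
  have := hf.apply_sub_le_of_hasFDerivAt (Set.mem_univ a) (Set.mem_univ v) hd.hasFDerivAt
  rw [bregmanDiv, inner_gradient_left]
  linarith

theorem bregmanDiv_const_mul_sum {ι : Type*} {s : Finset ι} {g : ι → E → ℝ} {a : E}
    (hg : ∀ i ∈ s, DifferentiableAt ℝ (g i) a) (c : ℝ) (v : E) :
    bregmanDiv (fun w => c * ∑ i ∈ s, g i w) a v = c * ∑ i ∈ s, bregmanDiv (g i) a v := by
  have hsum : DifferentiableAt ℝ (fun w => ∑ i ∈ s, g i w) a := by fun_prop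
  simp only [bregmanDiv, inner_gradient_left, fderiv_const_mul hsum, fderiv_fun_sum hg]
  simp [Finset.sum_sub_distrib, mul_sub]

end Bregman

section Averaging

theorem Fintype.expect_comp_eval {ι M : Type*} [Fintype ι] [DecidableEq ι] {β : ι → Type*}
    [∀ i, Fintype (β i)] [∀ i, Nonempty (β i)] [AddCommMonoid M] [Module ℚ≥0 M]
    (n : ι) (h : β n → M) : 𝔼 x : (∀ i, β i), h (x n) = 𝔼 j, h j := by
  rw [Fintype.expect_equiv (Equiv.piSplitAt n β) (fun x => h (x n)) (fun z => h z.1)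
      fun _ => rfl, ← Finset.univ_product_univ, Finset.expect_product' univ univ (fun j _ => h j)]
  simp

theorem Fintype.sum_apply_update {ι α M : Type*} [Fintype ι] [DecidableEq ι] [AddCommGroup M]
    (d : ι → α → M) (y : ι → α) (k : ι) (a : α) :
    ∑ j, d j (update y k a j) = ∑ j, d j (y j) - d k (y k) + d k a := by
  simp_rw [apply_update (fun j => d j) y k a]
  rw [Finset.sum_update_of_mem (mem_univ k), Finset.sdiff_singleton_eq_erase,
    Finset.sum_erase_eq_sub (mem_univ k)]
  abel

theorem Fintype.expect_expect_apply_update {ι α K : Type*} [Fintype ι] [DecidableEq ι] [Field K]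
    [CharZero K] (d : ι → α → K) (y : ι → α) (a : α) :
    𝔼 k, 𝔼 j, d j (update y k a j)
      = (1 - (Fintype.card ι : K)⁻¹) * 𝔼 j, d j (y j)
        + (Fintype.card ι : K)⁻¹ * 𝔼 j, d j a := by
  simp only [Fintype.expect_eq_sum_div_card, Fintype.sum_apply_update, ← Finset.sum_div]
  rcases eq_or_ne (Fintype.card ι : K) 0 with h | h
  · simp [h]
  · rw [Finset.sum_add_distrib, Finset.sum_sub_distrib, Finset.sum_const, card_univ,
      nsmul_eq_mul]
    field_simp

theorem one_sub_inv_mul_add_inv_mul_le {K : Type*} [Field K] [LinearOrder K]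
    [IsStrictOrderedRing K] {a b q qmin qmax : K} (ha : 0 ≤ a) (hb : 0 ≤ b) (hqmin : 0 < qmin)
    (hqmin_le : qmin ≤ q) (hle_qmax : q ≤ qmax) :
    (1 - q⁻¹) * a + q⁻¹ * b ≤ (1 - qmax⁻¹) * a + qmin⁻¹ * b := by
  have hq : 0 < q := hqmin.trans_le hqmin_le
  gcongr

end Averaging

section Tables
variable {N p : ℕ} {q : Fin N → ℕ} {f : (n : Fin N) → Fin (q n) → Evec p → ℝ}
  {xstar : Evec p}

theorem ptbl_eq_sum_expect_bregmanDiv (y : (n : Fin N) → Fin (q n) → Evec p) :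
    ptbl f xstar y = ∑ n, 𝔼 j, bregmanDiv (f n j) xstar (y n j) := by
  simp only [ptbl, bregmanDiv, Fintype.expect_eq_sum_div_card, Fintype.card_fin, div_eq_inv_mul]

theorem optgap_eq_sum_expect_bregmanDiv
    (hdiff : ∀ n i, DifferentiableAt ℝ (f n i) xstar) (x : Fin N → Evec p) :
    optgap f xstar x = ∑ n, 𝔼 j, bregmanDiv (f n j) xstar (x n) := by
  refine Finset.sum_congr rfl fun n _ => ?_
  rw [Fintype.expect_eq_sum_div_card, Fintype.card_fin, div_eq_inv_mul,
    ← bregmanDiv_const_mul_sum fun i _ => hdiff n i]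
  rfl

theorem expect_ptbl_tblUpd [∀ n, NeZero (q n)] (x : Fin N → Evec p)
    (y : (n : Fin N) → Fin (q n) → Evec p) :
    𝔼 i : (n : Fin N) → Fin (q n), ptbl f xstar (tblUpd x y i)
      = ∑ n, ((1 - (q n : ℝ)⁻¹) * 𝔼 j, bregmanDiv (f n j) xstar (y n j)
        + (q n : ℝ)⁻¹ * 𝔼 j, bregmanDiv (f n j) xstar (x n)) := by
  simp_rw [ptbl_eq_sum_expect_bregmanDiv, tblUpd]
  rw [Finset.expect_sum_comm]
  refine sum_congr rfl fun n _ => ?_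
  rw [Fintype.expect_comp_eval (β := fun n => Fin (q n)) n
    (fun k => 𝔼 j, bregmanDiv (f n j) xstar (update (y n) k (x n) j)),
    Fintype.expect_expect_apply_update, Fintype.card_fin]

end Tables

theorem dsa_lemma4_table_decrement_general
    {N p : ℕ} {q : Fin N → ℕ} (hq : ∀ n, 0 < q n)
    (qmin qmax : ℕ)
    (hqmin₁ : ∀ n, qmin ≤ q n) (hqmin₂ : ∃ n, q n = qmin)
    (hqmax₁ : ∀ n, q n ≤ qmax)
    (f : (n : Fin N) → Fin (q n) → Evec p → ℝ)
    (hdiff : ∀ n i, Differentiable ℝ (f n i))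
    (hcvx : ∀ n i, ConvexOn ℝ Set.univ (f n i))
    (xstar : Evec p)
    (x : Fin N → Evec p)
    (y : (n : Fin N) → Fin (q n) → Evec p) :
    (∏ n, (q n : ℝ))⁻¹ * ∑ i : (n : Fin N) → Fin (q n), ptbl f xstar (tblUpd x y i)
      ≤ (1 - (qmax : ℝ)⁻¹) * ptbl f xstar y + (qmin : ℝ)⁻¹ * optgap f xstar x := by
  have hqmin : (0 : ℝ) < qmin := let ⟨n, hn⟩ := hqmin₂; Nat.cast_pos.mpr (hn ▸ hq n)
  have : ∀ n, NeZero (q n) := fun n => ⟨(hq n).ne'⟩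
  have hB : ∀ n j v, 0 ≤ bregmanDiv (f n j) xstar v :=
    fun n j v => bregmanDiv_nonneg (hcvx n j) (hdiff n j _) v
  have havg :
      (∏ n, (q n : ℝ))⁻¹ * ∑ i : (n : Fin N) → Fin (q n), ptbl f xstar (tblUpd x y i)
        = 𝔼 i : (n : Fin N) → Fin (q n), ptbl f xstar (tblUpd x y i) := by
    simp only [Fintype.expect_eq_sum_div_card, Fintype.card_pi, Fintype.card_fin, Nat.cast_prod,
      div_eq_inv_mul]
  rw [havg, expect_ptbl_tblUpd, ptbl_eq_sum_expect_bregmanDiv,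
    optgap_eq_sum_expect_bregmanDiv fun n i => hdiff n i xstar, mul_sum, mul_sum,
    ← sum_add_distrib]
  exact sum_le_sum fun n _ => one_sub_inv_mul_add_inv_mul_le
    (expect_nonneg fun j _ => hB n j _) (expect_nonneg fun j _ => hB n j _) hqmin
    (by exact_mod_cast hqmin₁ n) (by exact_mod_cast hqmax₁ n)

/-- **Lemma 4 of the DSA paper.**  With all `f_{n,i}` convex and differentiable,
`q_min = min_n q_n`, `q_max = max_n q_n`, and `y⁺(i)` the table obtained from `y`
by replacing entry `i_n` at node `n` by `x_n`, the uniform average over joint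
index choices `i ∈ ∏_n {1,…,q_n}` satisfies
`E_i[p(y⁺(i))] ≤ (1 − 1/q_max) p(y) + (1/q_min)[f(x) − f(x*) − ⟨∇f(x*), x − x*⟩]`. -/
theorem dsa_lemma4_table_decrement
    {N p : ℕ} {q : Fin N → ℕ} (hq : ∀ n, 0 < q n)
    (qmin qmax : ℕ)
    (hqmin₁ : ∀ n, qmin ≤ q n) (hqmin₂ : ∃ n, q n = qmin)
    (hqmax₁ : ∀ n, q n ≤ qmax) (hqmax₂ : ∃ n, q n = qmax)
    (f : (n : Fin N) → Fin (q n) → Evec p → ℝ)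
    (hdiff : ∀ n i, Differentiable ℝ (f n i))
    (hcvx : ∀ n i, ConvexOn ℝ Set.univ (f n i))
    (xstar : Evec p)
    (hxstar : ∀ w, ∑ n, locf f n xstar ≤ ∑ n, locf f n w)
    (x : Fin N → Evec p)
    (y : (n : Fin N) → Fin (q n) → Evec p) :
    (∏ n, (q n : ℝ))⁻¹ * ∑ i : (n : Fin N) → Fin (q n), ptbl f xstar (tblUpd x y i)
      ≤ (1 - (qmax : ℝ)⁻¹) * ptbl f xstar y + (qmin : ℝ)⁻¹ * optgap f xstar x :=
  dsa_lemma4_table_decrement_general hq qmin qmax hqmin₁ hqmin₂ hqmax₁ f hdiff hcvx xstar x y
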